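/- Let n, p ≥ 1, η > 0, 0 < μ ≤ G, and let W ∈ ℝ^{n×n} be doubly stochastic with ρ := ‖W − (1/n)J_n‖. For i = 1, …, n let H_i be a real symmetric p×p matrix with (1/G) I_p ⪯ H_i ⪯ (1/μ) I_p. Let θ, y ∈ ℝ^{np} with blocks θ_i, y_i, let d ∈ ℝ^{np} be the vector with blocks d_i := H_i y_i, and set θ⁺ := (W ⊗ I_p)(θ + η d). Then ‖θ⁺ − 𝟙_n⊗θ̄⁺‖² ≤ 2ρ² ‖θ − 𝟙_n⊗θ̄‖² + (4η²ρ²/μ²) ‖y − 𝟙_n⊗ȳ‖² + (G²η²ρ²/μ²) ‖d‖², where θ̄, θ̄⁺, ȳ denote block averages. -/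

import Mathlib

open scoped BigOperators

/-- Spectral (ℓ²-operator) norm of a real matrix. -/
noncomputable def specNorm {n m : ℕ} (M : Matrix (Fin n) (Fin m) ℝ) : ℝ :=
  ‖LinearMap.toContinuousLinearMap (Matrix.toEuclideanLin M)‖

/-- ℝ^{np}, viewed as n blocks of size p, with the Euclidean norm. -/
abbrev BlockVec (n p : ℕ) : Type := PiLp 2 (fun _ : Fin n => EuclideanSpace ℝ (Fin p))

/-- Block average ā := (1/n) ∑ᵢ aᵢ. -/
noncomputable def blockAvg {n p : ℕ} (a : BlockVec n p) : EuclideanSpace ℝ (Fin p) :=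
  (n : ℝ)⁻¹ • ∑ i, a i

/-- 𝟙_n ⊗ x : the block vector all of whose blocks equal x. -/
def consensus {n p : ℕ} (x : EuclideanSpace ℝ (Fin p)) : BlockVec n p := WithLp.toLp 2 (fun _ => x)

/-- Action of W ⊗ I_p on a block vector. -/
noncomputable def kronApply {n p : ℕ} (W : Matrix (Fin n) (Fin n) ℝ) (a : BlockVec n p) :
    BlockVec n p := WithLp.toLp 2 (fun i => ∑ j, W i j • a j)

/-- The all-ones matrix J_n. -/
def onesMat (n : ℕ) : Matrix (Fin n) (Fin n) ℝ := Matrix.of fun _ _ => 1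

section matrixLemmas

open Matrix

lemma dot_symm {p : ℕ} {H : Matrix (Fin p) (Fin p) ℝ} (hH : H.IsSymm) (u v : Fin p → ℝ) :
    u ⬝ᵥ (H *ᵥ v) = v ⬝ᵥ (H *ᵥ u) := by
  rw [Matrix.dotProduct_mulVec, ← Matrix.mulVec_transpose, hH.eq, dotProduct_comm]

lemma dot_self_nonneg' {p : ℕ} (v : Fin p → ℝ) : 0 ≤ v ⬝ᵥ v :=
  Finset.sum_nonneg fun _ _ => mul_self_nonneg _

lemma dot_self_eq_sum_sq {p : ℕ} (v : Fin p → ℝ) : v ⬝ᵥ v = ∑ k, (v k)^2 := by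
  simp [dotProduct, pow_two]

lemma psd_cs' {p : ℕ} {H : Matrix (Fin p) (Fin p) ℝ} (hsym : H.IsSymm)
    (hnn : ∀ w : Fin p → ℝ, 0 ≤ w ⬝ᵥ (H *ᵥ w)) (u v : Fin p → ℝ) :
    (u ⬝ᵥ (H *ᵥ v))^2 ≤ (u ⬝ᵥ (H *ᵥ u)) * (v ⬝ᵥ (H *ᵥ v)) := by
  have hq : ∀ t : ℝ, 0 ≤ (v ⬝ᵥ (H *ᵥ v)) * (t * t) + (2 * (u ⬝ᵥ (H *ᵥ v))) * t
      + (u ⬝ᵥ (H *ᵥ u)) := by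
    intro t
    have h0 := hnn (u + t • v)
    rw [Matrix.mulVec_add, Matrix.mulVec_smul, dotProduct_add,
      add_dotProduct, add_dotProduct, dotProduct_smul,
      dotProduct_smul, smul_dotProduct, smul_dotProduct] at h0
    simp only [smul_eq_mul] at h0
    simp only [dot_symm hsym u v] at h0 ⊢
    linarith
  have hd := discrim_le_zero hq
  rw [discrim] at hd
  nlinarith [hd]

lemma psd_form_le {p : ℕ} {H : Matrix (Fin p) (Fin p) ℝ} {c : ℝ}
    (hHc : (c • (1 : Matrix (Fin p) (Fin p) ℝ) - H).PosSemidef) (v : Fin p → ℝ) :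
    v ⬝ᵥ (H *ᵥ v) ≤ c * (v ⬝ᵥ v) := by
  have h0 := hHc.dotProduct_mulVec_nonneg v
  have hst : star v = v := by simp
  rw [hst, Matrix.sub_mulVec, Matrix.smul_mulVec, Matrix.one_mulVec,
    dotProduct_sub, dotProduct_smul] at h0
  simp only [smul_eq_mul] at h0
  linarith

lemma psd_form_ge {p : ℕ} {H : Matrix (Fin p) (Fin p) ℝ} {b : ℝ}
    (hHb : (H - b • (1 : Matrix (Fin p) (Fin p) ℝ)).PosSemidef) (v : Fin p → ℝ) :
    b * (v ⬝ᵥ v) ≤ v ⬝ᵥ (H *ᵥ v) := by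
  have h0 := hHb.dotProduct_mulVec_nonneg v
  have hst : star v = v := by simp
  rw [hst, Matrix.sub_mulVec, Matrix.smul_mulVec, Matrix.one_mulVec,
    dotProduct_sub, dotProduct_smul] at h0
  simp only [smul_eq_mul] at h0
  linarith

lemma mulVec_sq_le {p : ℕ} {H : Matrix (Fin p) (Fin p) ℝ} {c : ℝ} (hsym : H.IsSymm)
    (hnn : ∀ w : Fin p → ℝ, 0 ≤ w ⬝ᵥ (H *ᵥ w))
    (hle : ∀ w : Fin p → ℝ, w ⬝ᵥ (H *ᵥ w) ≤ c * (w ⬝ᵥ w)) (v : Fin p → ℝ) :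
    (H *ᵥ v) ⬝ᵥ (H *ᵥ v) ≤ c^2 * (v ⬝ᵥ v) := by
  set u := H *ᵥ v with hu
  have hB : u ⬝ᵥ (H *ᵥ v) = u ⬝ᵥ u := by rw [← hu]
  have hcs := psd_cs' hsym hnn u v
  rw [hB] at hcs
  have h1 := hle u
  have h2 := hle v
  have h3 := hnn u
  have h4 := hnn v
  have h5 : 0 ≤ u ⬝ᵥ u := dot_self_nonneg' u
  have h6 : 0 ≤ v ⬝ᵥ v := dot_self_nonneg' v
  rcases eq_or_lt_of_le h5 with h | h
  · nlinarith
  · nlinarith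

lemma mulVec_sq_ge {p : ℕ} {H : Matrix (Fin p) (Fin p) ℝ} {b : ℝ} (hb : 0 ≤ b)
    (hHb : (H - b • (1 : Matrix (Fin p) (Fin p) ℝ)).PosSemidef) (v : Fin p → ℝ) :
    b^2 * (v ⬝ᵥ v) ≤ (H *ᵥ v) ⬝ᵥ (H *ᵥ v) := by
  set u := H *ᵥ v with hu
  have h1 := psd_form_ge hHb v
  have hcs : (v ⬝ᵥ u)^2 ≤ (v ⬝ᵥ v) * (u ⬝ᵥ u) := by
    have := Finset.sum_mul_sq_le_sq_mul_sq Finset.univ v u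
    simpa [dotProduct, pow_two] using this
  have h5 : 0 ≤ u ⬝ᵥ u := dot_self_nonneg' u
  have h6 : 0 ≤ v ⬝ᵥ v := dot_self_nonneg' v
  have hvu : v ⬝ᵥ u = v ⬝ᵥ (H *ᵥ v) := by rw [← hu]
  have h7 : b * (v ⬝ᵥ v) ≤ v ⬝ᵥ u := by rw [hvu]; exact h1
  have h8 : (b * (v ⬝ᵥ v))^2 ≤ (v ⬝ᵥ u)^2 :=
    pow_le_pow_left₀ (mul_nonneg hb h6) h7 2
  rcases eq_or_lt_of_le h6 with h | h
  · have hz : v ⬝ᵥ v = 0 := h.symm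
    rw [hz]; simpa using h5
  · nlinarith [h8, hcs, h]

lemma form_nonneg {p : ℕ} {A : Matrix (Fin p) (Fin p) ℝ} (hA : A.PosSemidef)
    (w : Fin p → ℝ) : 0 ≤ w ⬝ᵥ (A *ᵥ w) := by
  have := hA.dotProduct_mulVec_nonneg w
  have hst : star w = w := by simp
  rwa [hst] at this

end matrixLemmas

section blockLemmas

lemma piLp_sum_apply {κ : Type*} {β : κ → Type*} [∀ k, SeminormedAddCommGroup (β k)] {ι : Type*}
    (s : Finset ι) (f : ι → PiLp 2 β) (k : κ) : (∑ j ∈ s, f j) k = ∑ j ∈ s, f j k := by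
  classical
  induction s using Finset.induction with
  | empty => rfl
  | @insert a t h ih => rw [Finset.sum_insert h, Finset.sum_insert h, ← ih]; rfl

variable {n p : ℕ}

lemma eucl_norm_sq (x : EuclideanSpace ℝ (Fin p)) : ‖x‖^2 = ∑ k, (x k)^2 := by
  rw [PiLp.norm_sq_eq_of_L2]
  congr 1; ext k; rw [Real.norm_eq_abs, sq_abs]

lemma block_norm_sq (a : BlockVec n p) : ‖a‖^2 = ∑ i, ‖a i‖^2 :=
  PiLp.norm_sq_eq_of_L2 _ a

lemma block_sub_apply (a b : BlockVec n p) (i : Fin n) : (a - b) i = a i - b i := rfl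

lemma consensus_apply (x : EuclideanSpace ℝ (Fin p)) (i : Fin n) :
    (consensus x : BlockVec n p) i = x := rfl

lemma consensus_sub (x z : EuclideanSpace ℝ (Fin p)) :
    (consensus (x - z) : BlockVec n p) = consensus x - consensus z := rfl

lemma consensus_zero : (consensus 0 : BlockVec n p) = 0 := rfl

lemma blockAvg_consensus (hn : (n : ℝ) ≠ 0) (x : EuclideanSpace ℝ (Fin p)) :
    blockAvg (consensus x : BlockVec n p) = x := by
  unfold blockAvg consensus
  rw [Finset.sum_const, Finset.card_univ, Fintype.card_fin,
    ← Nat.cast_smul_eq_nsmul ℝ, smul_smul, inv_mul_cancel₀ hn, one_smul]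

lemma blockAvg_sub (a b : BlockVec n p) : blockAvg (a - b) = blockAvg a - blockAvg b := by
  unfold blockAvg
  rw [← smul_sub, ← Finset.sum_sub_distrib]
  rfl

lemma blockAvg_add (a b : BlockVec n p) : blockAvg (a + b) = blockAvg a + blockAvg b := by
  unfold blockAvg
  rw [← smul_add, ← Finset.sum_add_distrib]
  rfl

lemma blockAvg_smul (c : ℝ) (a : BlockVec n p) : blockAvg (c • a) = c • blockAvg a := by
  unfold blockAvg
  rw [smul_comm]
  congr 1
  calc ∑ i, (c • a) i = ∑ i, c • a i := Finset.sum_congr rfl fun i _ => rfl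
    _ = c • ∑ i, a i := (Finset.smul_sum).symm

lemma inner_center_consensus (hn : (n : ℝ) ≠ 0) (a : BlockVec n p)
    (x : EuclideanSpace ℝ (Fin p)) :
    (inner ℝ (a - consensus (blockAvg a)) (consensus x) : ℝ) = 0 := by
  set b : BlockVec n p := a - consensus (blockAvg a) with hb
  rw [PiLp.inner_apply]
  have hbi : ∀ i, b i = a i - blockAvg a := fun i => rfl
  have hstep : ∀ i : Fin n, (inner ℝ (b i) ((consensus x : BlockVec n p) i) : ℝ)
      = inner ℝ (a i) x - inner ℝ (blockAvg a) x := by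
    intro i
    rw [hbi i, inner_sub_left]
    rfl
  rw [Finset.sum_congr rfl fun i _ => hstep i]
  rw [Finset.sum_sub_distrib, ← sum_inner, Finset.sum_const, Finset.card_univ, Fintype.card_fin]
  have havg : (inner ℝ (blockAvg a) x : ℝ) = (n : ℝ)⁻¹ * inner ℝ (∑ i, a i) x := by
    unfold blockAvg
    rw [real_inner_smul_left]
  rw [havg, nsmul_eq_mul]
  field_simp
  ring

lemma center_norm_le (hn : (n : ℝ) ≠ 0) (a : BlockVec n p) (x : EuclideanSpace ℝ (Fin p)) :
    ‖a - consensus (blockAvg a)‖ ≤ ‖a - consensus x‖ := by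
  have hdecomp : a - consensus x = (a - consensus (blockAvg a)) + consensus (blockAvg a - x) := by
    rw [consensus_sub]; abel
  have hsq : ‖a - consensus x‖^2
      = ‖a - consensus (blockAvg a)‖^2 + ‖(consensus (blockAvg a - x) : BlockVec n p)‖^2 := by
    rw [hdecomp, norm_add_sq_real, inner_center_consensus hn]
    ring
  nlinarith [norm_nonneg (a - consensus x), norm_nonneg (a - consensus (blockAvg a)),
    sq_nonneg ‖(consensus (blockAvg a - x) : BlockVec n p)‖]

lemma center_norm_le_self (hn : (n : ℝ) ≠ 0) (a : BlockVec n p) :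
    ‖a - consensus (blockAvg a)‖ ≤ ‖a‖ := by
  have := center_norm_le hn a 0
  rwa [consensus_zero, sub_zero] at this

lemma consensus_norm_sq (x : EuclideanSpace ℝ (Fin p)) :
    ‖(consensus x : BlockVec n p)‖^2 = n * ‖x‖^2 := by
  rw [block_norm_sq]
  simp [consensus]

lemma consensus_avg_norm_le (hn : (n : ℝ) ≠ 0) (a : BlockVec n p) :
    (n : ℝ) * ‖blockAvg a‖^2 ≤ ‖a‖^2 := by
  have hdecomp : a = (a - consensus (blockAvg a)) + consensus (blockAvg a) := by abel
  have hsq : ‖a‖^2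
      = ‖a - consensus (blockAvg a)‖^2 + ‖(consensus (blockAvg a) : BlockVec n p)‖^2 := by
    conv_lhs => rw [hdecomp]
    rw [norm_add_sq_real, inner_center_consensus hn]
    ring
  rw [← consensus_norm_sq]
  nlinarith [sq_nonneg ‖a - consensus (blockAvg a)‖]

lemma kron_sub_matrix (M N : Matrix (Fin n) (Fin n) ℝ) (a : BlockVec n p) :
    kronApply (M - N) a = kronApply M a - kronApply N a := by
  refine PiLp.ext fun i => ?_
  show ∑ j, (M - N) i j • a j = (kronApply M a - kronApply N a) i
  have : (kronApply M a - kronApply N a) i = ∑ j, M i j • a j - ∑ j, N i j • a j := rfl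
  rw [this, ← Finset.sum_sub_distrib]
  congr 1; funext j
  rw [Matrix.sub_apply, sub_smul]

lemma kron_sub_vec (M : Matrix (Fin n) (Fin n) ℝ) (a b : BlockVec n p) :
    kronApply M (a - b) = kronApply M a - kronApply M b := by
  refine PiLp.ext fun i => ?_
  show ∑ j, M i j • (a - b) j = (kronApply M a - kronApply M b) i
  have : (kronApply M a - kronApply M b) i = ∑ j, M i j • a j - ∑ j, M i j • b j := rfl
  rw [this, ← Finset.sum_sub_distrib]
  congr 1; funext j
  have : (a - b) j = a j - b j := rfl
  rw [this, smul_sub]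

lemma kron_add_vec (M : Matrix (Fin n) (Fin n) ℝ) (a b : BlockVec n p) :
    kronApply M (a + b) = kronApply M a + kronApply M b := by
  refine PiLp.ext fun i => ?_
  show ∑ j, M i j • (a + b) j = (kronApply M a + kronApply M b) i
  have : (kronApply M a + kronApply M b) i = ∑ j, M i j • a j + ∑ j, M i j • b j := rfl
  rw [this, ← Finset.sum_add_distrib]
  congr 1; funext j
  have : (a + b) j = a j + b j := rfl
  rw [this, smul_add]

lemma kron_smul_vec (M : Matrix (Fin n) (Fin n) ℝ) (c : ℝ) (a : BlockVec n p) :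
    kronApply M (c • a) = c • kronApply M a := by
  refine PiLp.ext fun i => ?_
  show ∑ j, M i j • (c • a) j = (c • kronApply M a) i
  have : (c • kronApply M a) i = c • ∑ j, M i j • a j := rfl
  rw [this, Finset.smul_sum]
  congr 1; funext j
  have : (c • a) j = c • a j := rfl
  rw [this, smul_comm]

lemma kron_consensus (W : Matrix (Fin n) (Fin n) ℝ)
    (hWrow : W.mulVec (fun _ => (1 : ℝ)) = fun _ => 1) (x : EuclideanSpace ℝ (Fin p)) :
    kronApply W (consensus x) = consensus x := by
  refine PiLp.ext fun i => ?_
  show ∑ j, W i j • x = x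
  rw [← Finset.sum_smul]
  have := congrFun hWrow i
  simp only [Matrix.mulVec, dotProduct, mul_one] at this
  rw [this, one_smul]

lemma blockAvg_kron (W : Matrix (Fin n) (Fin n) ℝ)
    (hWcol : Matrix.vecMul (fun _ => (1 : ℝ)) W = fun _ => 1) (a : BlockVec n p) :
    blockAvg (kronApply W a) = blockAvg a := by
  unfold blockAvg
  congr 1
  have h1 : ∑ i, kronApply W a i = ∑ i, ∑ j, W i j • a j := rfl
  rw [h1, Finset.sum_comm]
  congr 1; funext j
  rw [← Finset.sum_smul]
  have := congrFun hWcol j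
  simp only [Matrix.vecMul, dotProduct, one_mul] at this
  rw [this, one_smul]

lemma kron_onesMat (hn : (n : ℝ) ≠ 0) (a : BlockVec n p) :
    kronApply ((n : ℝ)⁻¹ • onesMat n) a = consensus (blockAvg a) := by
  refine PiLp.ext fun i => ?_
  show ∑ j, ((n : ℝ)⁻¹ • onesMat n) i j • a j = blockAvg a
  unfold blockAvg
  rw [Finset.smul_sum]
  congr 1; funext j
  have h1 : ((n : ℝ)⁻¹ • onesMat n) i j = (n : ℝ)⁻¹ := by
    simp [onesMat, Matrix.smul_apply]
  rw [h1]

lemma center_kron (hn : (n : ℝ) ≠ 0) (W : Matrix (Fin n) (Fin n) ℝ)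
    (hWrow : W.mulVec (fun _ => (1 : ℝ)) = fun _ => 1)
    (hWcol : Matrix.vecMul (fun _ => (1 : ℝ)) W = fun _ => 1) (a : BlockVec n p) :
    kronApply W a - consensus (blockAvg (kronApply W a)) =
      kronApply (W - (n : ℝ)⁻¹ • onesMat n) (a - consensus (blockAvg a)) := by
  rw [kron_sub_matrix, kron_sub_vec, kron_sub_vec, kron_consensus W hWrow,
    kron_onesMat hn, kron_onesMat hn, blockAvg_consensus hn, blockAvg_kron W hWcol]
  abel

lemma kron_norm_le (M : Matrix (Fin n) (Fin n) ℝ) (a : BlockVec n p) :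
    ‖kronApply M a‖ ≤ specNorm M * ‖a‖ := by
  classical
  have hns : 0 ≤ specNorm M := norm_nonneg _
  set s := specNorm M with hs
  let colv : Fin p → EuclideanSpace ℝ (Fin n) := fun k => WithLp.toLp 2 (fun j => a j k : Fin n → ℝ)
  have hop : ∀ k, ‖Matrix.toEuclideanLin M (colv k)‖ ≤ s * ‖colv k‖ := by
    intro k
    rw [hs]
    unfold specNorm
    exact (LinearMap.toContinuousLinearMap (Matrix.toEuclideanLin M)).le_opNorm _
  have happ : ∀ k i, Matrix.toEuclideanLin M (colv k) i = kronApply M a i k := by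
    intro k i
    have h1 : Matrix.toEuclideanLin M (colv k) i = ∑ j, M i j * a j k := rfl
    have h2 : kronApply M a i k = ∑ j, M i j * a j k := by
      show (∑ j, M i j • a j) k = _
      rw [piLp_sum_apply]
      rfl
    rw [h1, h2]
  have hsq : ‖kronApply M a‖^2 ≤ s^2 * ‖a‖^2 := by
    rw [block_norm_sq, block_norm_sq]
    have lhs_eq : ∑ i, ‖kronApply M a i‖^2 = ∑ k, ‖Matrix.toEuclideanLin M (colv k)‖^2 := by
      have e1 : ∑ i, ‖kronApply M a i‖^2 = ∑ i, ∑ k, (kronApply M a i k)^2 :=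
        Finset.sum_congr rfl fun i _ => eucl_norm_sq _
      have e2 : ∑ k, ‖Matrix.toEuclideanLin M (colv k)‖^2
          = ∑ k, ∑ i, (kronApply M a i k)^2 := by
        refine Finset.sum_congr rfl fun k _ => ?_
        rw [eucl_norm_sq]
        exact Finset.sum_congr rfl fun i _ => by rw [happ]
      rw [e1, e2, Finset.sum_comm]
    have rhs_eq : ∑ j, ‖a j‖^2 = ∑ k, ‖colv k‖^2 := by
      have e1 : ∑ j, ‖a j‖^2 = ∑ j, ∑ k, (a j k)^2 :=
        Finset.sum_congr rfl fun j _ => eucl_norm_sq _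
      have e2 : ∑ k, ‖colv k‖^2 = ∑ k, ∑ j, (a j k)^2 :=
        Finset.sum_congr rfl fun k _ => eucl_norm_sq _
      rw [e1, e2, Finset.sum_comm]
    rw [lhs_eq, rhs_eq, Finset.mul_sum]
    refine Finset.sum_le_sum fun k _ => ?_
    calc ‖Matrix.toEuclideanLin M (colv k)‖^2 ≤ (s * ‖colv k‖)^2 :=
          pow_le_pow_left₀ (norm_nonneg _) (hop k) 2
      _ = s^2 * ‖colv k‖^2 := by ring
  nlinarith [norm_nonneg (kronApply M a), norm_nonneg a, mul_nonneg hns (norm_nonneg a)]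

end blockLemmas

section step3

open Matrix

variable {n p : ℕ}

lemma consensus_add (x z : EuclideanSpace ℝ (Fin p)) :
    (consensus (x + z) : BlockVec n p) = consensus x + consensus z := rfl

lemma consensus_smul (c : ℝ) (x : EuclideanSpace ℝ (Fin p)) :
    (consensus (c • x) : BlockVec n p) = c • consensus x := rfl

lemma eucl_norm_sq_dot (x : EuclideanSpace ℝ (Fin p)) : ‖x‖^2 = x ⬝ᵥ x := by
  rw [eucl_norm_sq, dot_self_eq_sum_sq]

noncomputable def eVec (H : Fin n → Matrix (Fin p) (Fin p) ℝ) (y : BlockVec n p) :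
    BlockVec n p := WithLp.toLp 2 (fun i => WithLp.toLp 2 ((H i) *ᵥ (y i - blockAvg y)))

noncomputable def fVec (H : Fin n → Matrix (Fin p) (Fin p) ℝ) (y : BlockVec n p) :
    BlockVec n p := WithLp.toLp 2 (fun i => WithLp.toLp 2 ((H i) *ᵥ (blockAvg y)))

lemma arith_pos {cd ey fz by' dn G μ : ℝ} (hμ : 0 < μ) (hG : 0 < G)
    (hcd0 : 0 ≤ cd) (hs : cd ≤ ey + fz)
    (hE : ey^2 ≤ (μ⁻¹)^2 * by'^2)
    (hF2 : fz^2 ≤ (2*μ)⁻¹^2 * (G^2 * dn^2)) :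
    cd^2 ≤ 2/μ^2 * by'^2 + G^2/(2*μ^2) * dn^2 := by
  have hs2 : cd^2 ≤ (ey + fz)^2 := pow_le_pow_left₀ hcd0 hs 2
  have hcd2 : cd^2 ≤ 2*ey^2 + 2*fz^2 := by nlinarith [sq_nonneg (ey - fz)]
  have harith : 2*((μ⁻¹)^2*by'^2) + 2*((2*μ)⁻¹^2*(G^2*dn^2))
      = 2/μ^2*by'^2 + G^2/(2*μ^2)*dn^2 := by
    field_simp
  linarith

lemma arith_neg {cd by' dn G μ : ℝ} (hμ : 0 < μ)
    (h2 : cd^2 ≤ dn^2) (hcase : 2*μ^2 ≤ G^2) :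
    cd^2 ≤ 2/μ^2 * by'^2 + G^2/(2*μ^2) * dn^2 := by
  have h3 : (1:ℝ) ≤ G^2/(2*μ^2) := by
    rw [le_div_iff₀ (by positivity)]
    linarith
  have h4 : dn^2 ≤ G^2/(2*μ^2) * dn^2 := by nlinarith [sq_nonneg dn]
  have h5 : (0:ℝ) ≤ 2/μ^2 * by'^2 := by positivity
  linarith

lemma arith_main {A Bθ Bd By D ρ η G μ : ℝ} (hμ : 0 < μ) (hη : 0 < η) (hρ0 : 0 ≤ ρ)
    (hA0 : 0 ≤ A) (h1' : A ≤ ρ * (Bθ + η * Bd))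
    (h3 : Bd^2 ≤ 2/μ^2 * By^2 + G^2/(2*μ^2) * D^2) :
    A^2 ≤ 2*ρ^2*Bθ^2 + 4*η^2*ρ^2/μ^2*By^2 + G^2*η^2*ρ^2/μ^2*D^2 := by
  have s1 : A^2 ≤ (ρ * (Bθ + η * Bd))^2 := pow_le_pow_left₀ hA0 h1' 2
  have s2 : (ρ * (Bθ + η * Bd))^2 ≤ ρ^2 * (2 * Bθ^2 + 2 * η^2 * Bd^2) := by
    have h : (Bθ + η * Bd)^2 ≤ 2 * Bθ^2 + 2 * η^2 * Bd^2 := by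
      nlinarith [sq_nonneg (Bθ - η * Bd)]
    calc (ρ * (Bθ + η * Bd))^2 = ρ^2 * (Bθ + η * Bd)^2 := by ring
      _ ≤ ρ^2 * (2 * Bθ^2 + 2 * η^2 * Bd^2) := mul_le_mul_of_nonneg_left h (sq_nonneg ρ)
  have s3 : ρ^2 * (2 * Bθ^2 + 2 * η^2 * Bd^2)
      ≤ ρ^2 * (2 * Bθ^2 + 2 * η^2 * (2/μ^2 * By^2 + G^2/(2*μ^2) * D^2)) := by
    apply mul_le_mul_of_nonneg_left _ (sq_nonneg ρ)
    nlinarith [sq_nonneg η, h3]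
  have s4 : ρ^2 * (2 * Bθ^2 + 2 * η^2 * (2/μ^2 * By^2 + G^2/(2*μ^2) * D^2))
      = 2*ρ^2*Bθ^2 + 4*η^2*ρ^2/μ^2*By^2 + G^2*η^2*ρ^2/μ^2*D^2 := by
    field_simp
    ring
  linarith [s1, s2, s3, s4.le]

lemma centered_d_bound (hn : (n : ℝ) ≠ 0) {G μ : ℝ} (hμ : 0 < μ) (hμG : μ ≤ G)
    (H : Fin n → Matrix (Fin p) (Fin p) ℝ)
    (hHsymm : ∀ i, (H i).IsSymm)
    (hHlow : ∀ i, (H i - G⁻¹ • 1).PosSemidef)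
    (hHup : ∀ i, ((μ⁻¹ • (1 : Matrix (Fin p) (Fin p) ℝ)) - H i).PosSemidef)
    (y d : BlockVec n p) (hd : ∀ i, d i = (H i).mulVec (y i)) :
    ‖d - consensus (blockAvg d)‖^2 ≤
      2/μ^2 * ‖y - consensus (blockAvg y)‖^2 + G^2/(2*μ^2) * ‖d‖^2 := by
  have hG : 0 < G := lt_of_lt_of_le hμ hμG
  have hGinv : (0:ℝ) ≤ G⁻¹ := by positivity
  -- ‖y‖² ≤ G² ‖d‖²
  have hyd : ‖y‖^2 ≤ G^2 * ‖d‖^2 := by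
    have hsum : ∀ i, (G⁻¹)^2 * (y i ⬝ᵥ y i) ≤ d i ⬝ᵥ d i := by
      intro i
      rw [hd i]
      exact mulVec_sq_ge hGinv (hHlow i) (y i)
    have h1 : (G⁻¹)^2 * ‖y‖^2 ≤ ‖d‖^2 := by
      rw [block_norm_sq, block_norm_sq, Finset.mul_sum]
      refine Finset.sum_le_sum fun i _ => ?_
      rw [eucl_norm_sq_dot, eucl_norm_sq_dot]
      exact hsum i
    have hg2 : (G⁻¹)^2 * G^2 = 1 := by field_simp
    nlinarith [h1, sq_nonneg G, sq_nonneg ‖y‖]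
  by_cases hcase : G^2 ≤ 2*μ^2
  · -- decomposition case; here G ≤ 2μ
    have hG2 : G ≤ 2*μ := by nlinarith
    set e := eVec H y with he
    set f := fVec H y with hf
    have hdef : d = e + f := by
      refine PiLp.ext fun i => ?_
      show d i = e i + f i
      have h1 : e i = (H i) *ᵥ (y i - blockAvg y) := rfl
      have h2 : f i = (H i) *ᵥ (blockAvg y) := rfl
      have h4 : y i - blockAvg y + blockAvg y = y i := by abel
      apply WithLp.ofLp_injective 2
      rw [WithLp.ofLp_add, hd i, h1, h2, ← Matrix.mulVec_add, sub_add_cancel]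
    have hC : d - consensus (blockAvg d)
        = (e - consensus (blockAvg e)) + (f - consensus (blockAvg f)) := by
      rw [hdef, blockAvg_add, consensus_add]
      abel
    have hCd : ‖d - consensus (blockAvg d)‖
        ≤ ‖e - consensus (blockAvg e)‖ + ‖f - consensus (blockAvg f)‖ := by
      rw [hC]; exact norm_add_le _ _
    have hCe : ‖e - consensus (blockAvg e)‖ ≤ ‖e‖ := center_norm_le_self hn e
    set z : EuclideanSpace ℝ (Fin p) := G⁻¹ • blockAvg y with hz
    have hCf : ‖f - consensus (blockAvg f)‖ ≤ ‖f - consensus z‖ := center_norm_le hn f z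
    -- bound ‖e‖²
    have hHform : ∀ i, ∀ w : Fin p → ℝ, 0 ≤ w ⬝ᵥ ((H i) *ᵥ w) := by
      intro i w
      have h1 := psd_form_ge (hHlow i) w
      have h2 := dot_self_nonneg' w
      nlinarith [mul_nonneg hGinv h2]
    have hHle : ∀ i, ∀ w : Fin p → ℝ, w ⬝ᵥ ((H i) *ᵥ w) ≤ μ⁻¹ * (w ⬝ᵥ w) :=
      fun i w => psd_form_le (hHup i) w
    have hE : ‖e‖^2 ≤ (μ⁻¹)^2 * ‖y - consensus (blockAvg y)‖^2 := by
      rw [block_norm_sq, block_norm_sq, Finset.mul_sum]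
      refine Finset.sum_le_sum fun i _ => ?_
      rw [eucl_norm_sq_dot, eucl_norm_sq_dot]
      have h1 : e i = (H i) *ᵥ (y i - blockAvg y) := rfl
      rw [h1, block_sub_apply y (consensus (blockAvg y)) i,
        consensus_apply (blockAvg y) i]
      exact mulVec_sq_le (hHsymm i) (hHform i) (hHle i) _
    -- bound ‖f - consensus z‖²
    have hμGinv : (0:ℝ) ≤ μ⁻¹ - G⁻¹ := by
      have : G⁻¹ ≤ μ⁻¹ := by
        rw [inv_le_inv₀ hG hμ]
        exact hμG
      linarith
    have hμGinv2 : μ⁻¹ - G⁻¹ ≤ (2*μ)⁻¹ := by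
      have h1 : (2*μ)⁻¹ ≤ G⁻¹ := by
        rw [inv_le_inv₀ (by linarith) hG]
        exact hG2
      have h2 : μ⁻¹ - (2*μ)⁻¹ = (2*μ)⁻¹ := by
        field_simp
        ring
      linarith
    have hbound : ∀ i : Fin n, ‖f i - z‖^2 ≤ (μ⁻¹ - G⁻¹)^2 * ‖blockAvg y‖^2 := by
      intro i
      set w : Fin p → ℝ := WithLp.ofLp (blockAvg y) with hw
      have hfi : f i = (H i) *ᵥ w := rfl
      have hzz : z = G⁻¹ • w := rfl
      have h3 : WithLp.ofLp (f i - z) = (H i - G⁻¹ • 1) *ᵥ w := by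
        rw [WithLp.ofLp_sub, hfi, hzz, Matrix.sub_mulVec, Matrix.smul_mulVec, Matrix.one_mulVec]
      rw [eucl_norm_sq_dot, eucl_norm_sq_dot, h3]
      set A := H i - G⁻¹ • (1 : Matrix (Fin p) (Fin p) ℝ) with hA
      have hAsym : A.IsSymm := by
        rw [hA, Matrix.IsSymm, Matrix.transpose_sub, (hHsymm i).eq,
          Matrix.transpose_smul, Matrix.transpose_one]
      have hAnn : ∀ w : Fin p → ℝ, 0 ≤ w ⬝ᵥ (A *ᵥ w) := form_nonneg (hHlow i)
      have hAle : ∀ w : Fin p → ℝ, w ⬝ᵥ (A *ᵥ w) ≤ (μ⁻¹ - G⁻¹) * (w ⬝ᵥ w) := by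
        intro w
        rw [hA, Matrix.sub_mulVec, Matrix.smul_mulVec, Matrix.one_mulVec,
          dotProduct_sub, dotProduct_smul]
        have h4 := hHle i w
        simp only [smul_eq_mul]
        nlinarith [dot_self_nonneg' w]
      exact mulVec_sq_le hAsym hAnn hAle _
    clear_value e f z
    have hF : ‖f - consensus z‖^2 ≤ (n : ℝ) * ((μ⁻¹ - G⁻¹)^2 * ‖blockAvg y‖^2) := by
      rw [block_norm_sq]
      refine le_trans (Finset.sum_le_sum (g := fun _ => (μ⁻¹ - G⁻¹)^2 * ‖blockAvg y‖^2)
        fun i _ => ?_) (le_of_eq ?_)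
      · rw [block_sub_apply f (consensus z) i, consensus_apply z i]
        exact hbound i
      · rw [Finset.sum_const, Finset.card_univ, Fintype.card_fin, nsmul_eq_mul]
    have hny : (n : ℝ) * ‖blockAvg y‖^2 ≤ ‖y‖^2 := consensus_avg_norm_le hn y
    have hF2 : ‖f - consensus z‖^2 ≤ (2*μ)⁻¹^2 * (G^2 * ‖d‖^2) := by
      have t0 : (n : ℝ) * ((μ⁻¹ - G⁻¹)^2 * ‖blockAvg y‖^2)
          = (μ⁻¹ - G⁻¹)^2 * ((n : ℝ) * ‖blockAvg y‖^2) := by ring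
      have t1 : (μ⁻¹ - G⁻¹)^2 * ((n : ℝ) * ‖blockAvg y‖^2)
          ≤ (μ⁻¹ - G⁻¹)^2 * (G^2 * ‖d‖^2) :=
        mul_le_mul_of_nonneg_left (le_trans hny hyd) (sq_nonneg _)
      have t2 : (μ⁻¹ - G⁻¹)^2 * (G^2 * ‖d‖^2) ≤ (2*μ)⁻¹^2 * (G^2 * ‖d‖^2) := by
        have t3 := pow_le_pow_left₀ hμGinv hμGinv2 2
        have t4 : (0:ℝ) ≤ G^2 * ‖d‖^2 := by positivity
        exact mul_le_mul_of_nonneg_right t3 t4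
      exact hF.trans (t0.le.trans (t1.trans t2))
    have hs : ‖d - consensus (blockAvg d)‖ ≤ ‖e‖ + ‖f - consensus z‖ :=
      le_trans hCd (add_le_add hCe hCf)
    exact arith_pos hμ hG (norm_nonneg _) hs hE hF2
  · -- trivial case: G² ≥ 2μ²
    push_neg at hcase
    have h1 : ‖d - consensus (blockAvg d)‖ ≤ ‖d‖ := center_norm_le_self hn d
    have h2 := pow_le_pow_left₀ (norm_nonneg _) h1 2
    exact arith_neg hμ h2 hcase.le

end step3

theorem stmt2
    (n p : ℕ) (hn : 1 ≤ n) (hp : 1 ≤ p)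
    (η G μ : ℝ) (hη : 0 < η) (hμ : 0 < μ) (hμG : μ ≤ G)
    (W : Matrix (Fin n) (Fin n) ℝ)
    (hWrow : W.mulVec (fun _ => (1 : ℝ)) = fun _ => 1)
    (hWcol : Matrix.vecMul (fun _ => (1 : ℝ)) W = fun _ => 1)
    (ρ : ℝ) (hρdef : ρ = specNorm (W - (n : ℝ)⁻¹ • onesMat n))
    (H : Fin n → Matrix (Fin p) (Fin p) ℝ)
    (hHsymm : ∀ i, (H i).IsSymm)
    (hHlow : ∀ i, (H i - G⁻¹ • 1).PosSemidef)
    (hHup : ∀ i, ((μ⁻¹ • (1 : Matrix (Fin p) (Fin p) ℝ)) - H i).PosSemidef)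
    (θ y d θplus : BlockVec n p)
    (hd : ∀ i, d i = (H i).mulVec (y i))
    (hθp : θplus = kronApply W (θ + η • d)) :
    ‖θplus - consensus (blockAvg θplus)‖ ^ 2 ≤
      2 * ρ ^ 2 * ‖θ - consensus (blockAvg θ)‖ ^ 2
      + 4 * η ^ 2 * ρ ^ 2 / μ ^ 2 * ‖y - consensus (blockAvg y)‖ ^ 2
      + G ^ 2 * η ^ 2 * ρ ^ 2 / μ ^ 2 * ‖d‖ ^ 2 := by
  have hn0 : (n : ℝ) ≠ 0 := by
    have : 0 < n := hn
    exact_mod_cast this.ne'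
  have hρ0 : 0 ≤ ρ := hρdef ▸ norm_nonneg _
  have hkey : θplus - consensus (blockAvg θplus)
      = kronApply (W - (n : ℝ)⁻¹ • onesMat n)
          ((θ + η • d) - consensus (blockAvg (θ + η • d))) := by
    rw [hθp]
    exact center_kron hn0 W hWrow hWcol _
  have h1 : ‖θplus - consensus (blockAvg θplus)‖
      ≤ ρ * ‖(θ + η • d) - consensus (blockAvg (θ + η • d))‖ := by
    rw [hkey, hρdef]
    exact kron_norm_le _ _
  have hsplit : (θ + η • d) - consensus (blockAvg (θ + η • d))
      = (θ - consensus (blockAvg θ)) + η • (d - consensus (blockAvg d)) := by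
    rw [blockAvg_add, blockAvg_smul, consensus_add, consensus_smul, smul_sub]
    abel
  have h2 : ‖(θ + η • d) - consensus (blockAvg (θ + η • d))‖
      ≤ ‖θ - consensus (blockAvg θ)‖ + η * ‖d - consensus (blockAvg d)‖ := by
    rw [hsplit]
    refine le_trans (norm_add_le _ _) ?_
    rw [norm_smul, Real.norm_eq_abs, abs_of_pos hη]
  have h3 := centered_d_bound hn0 hμ hμG H hHsymm hHlow hHup y d hd
  have h1' : ‖θplus - consensus (blockAvg θplus)‖
      ≤ ρ * (‖θ - consensus (blockAvg θ)‖ + η * ‖d - consensus (blockAvg d)‖) :=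
    le_trans h1 (mul_le_mul_of_nonneg_left h2 hρ0)
  have := arith_main (A := ‖θplus - consensus (blockAvg θplus)‖)
    (Bθ := ‖θ - consensus (blockAvg θ)‖) (Bd := ‖d - consensus (blockAvg d)‖)
    (By := ‖y - consensus (blockAvg y)‖) (D := ‖d‖)
    hμ hη hρ0 (norm_nonneg _) h1' h3
  calc ‖θplus - consensus (blockAvg θplus)‖ ^ 2
      ≤ 2*ρ^2*‖θ - consensus (blockAvg θ)‖^2
        + 4*η^2*ρ^2/μ^2*‖y - consensus (blockAvg y)‖^2
        + G^2*η^2*ρ^2/μ^2*‖d‖^2 := this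
    _ = 2 * ρ ^ 2 * ‖θ - consensus (blockAvg θ)‖ ^ 2
        + 4 * η ^ 2 * ρ ^ 2 / μ ^ 2 * ‖y - consensus (blockAvg y)‖ ^ 2
        + G ^ 2 * η ^ 2 * ρ ^ 2 / μ ^ 2 * ‖d‖ ^ 2 := by ring
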